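/- Let A be an n×n real matrix with nonzero rows a₁ᵀ,…,aₙᵀ and trivial kernel (ker A = 0). Let G be a connected undirected simple graph on n vertices with Laplacian L, let Pᵢ = I − aᵢaᵢᵀ/(aᵢᵀaᵢ), P = diag(P₁,…,Pₙ), and L̄ = L ⊗ Iₙ. Then every complex eigenvalue of the n²×n² matrix P L̄ + I − P is real and strictly positive. -/

import Mathlib

open Matrix
open scoped Kronecker

/-- The orthogonal projection `Pᵢ = I - aᵢaᵢᵀ/(aᵢᵀaᵢ)` onto the hyperplane `{z : aᵢᵀz = 0}`. -/
noncomputable def projMat {n : ℕ} (a : Fin n → ℝ) : Matrix (Fin n) (Fin n) ℝ :=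
  1 - (a ⬝ᵥ a)⁻¹ • vecMulVec a a

/-- The block-diagonal matrix `P = diag(P₁,…,Pₘ)`, acting on `(ℝⁿ)ᵐ ≅ ℝ^{mn}`
(indexed by pairs `(block, coordinate)`). -/
noncomputable def blockP {m n : ℕ} (a : Fin m → Fin n → ℝ) :
    Matrix (Fin m × Fin n) (Fin m × Fin n) ℝ :=
  Matrix.of fun p q => if p.1 = q.1 then projMat (a p.1) p.2 q.2 else 0

/-!
If `M v = μ v` for `M = P L̄ + I - P` with `P` an orthogonal projection, applying `P` gives
`(μ - 1) (v - P v) = 0`. So either `μ = 1`, or `v = P v` and `μ ‖v‖² = v* L̄ v ≥ 0`, with equality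
only if `v ∈ range P ∩ ker L̄`. That intersection is trivial: since `G` is connected, `ker L̄`
consists of the vectors whose blocks all equal one `z`, and `Pᵢ z = z` for all `i` means `A z = 0`.
-/

open scoped ComplexOrder MatrixOrder

section Spectrum

variable {𝕜 ι : Type*} [RCLike 𝕜] [Fintype ι]

theorem eq_one_or_of_mulVec_eq_smul [DecidableEq ι] {P L : Matrix ι ι 𝕜} (hP : P * P = P)
    {v : ι → 𝕜} {μ : 𝕜} (hv : (P * L + 1 - P) *ᵥ v = μ • v) :
    μ = 1 ∨ (P *ᵥ v = v ∧ P *ᵥ L *ᵥ v = μ • v) := by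
  have hPLv : P *ᵥ L *ᵥ v = μ • P *ᵥ v := by
    have hPM : P * (P * L + 1 - P) = P * L := by
      rw [mul_sub, mul_add, mul_one, ← mul_assoc, hP, add_sub_cancel_right]
    rw [mulVec_mulVec, ← hPM, ← mulVec_mulVec, hv, mulVec_smul]
  have hsplit : (μ - 1) • (v - P *ᵥ v) = 0 := by
    rw [sub_smul, one_smul, smul_sub, ← hv, ← hPLv]
    simp only [sub_mulVec, add_mulVec, one_mulVec, mulVec_mulVec]
    abel
  rcases smul_eq_zero.mp hsplit with h | h
  · exact .inl (sub_eq_zero.mp h)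
  · have hPv : P *ᵥ v = v := (sub_eq_zero.mp h).symm
    exact .inr ⟨hPv, by rw [hPLv, hPv]⟩

theorem pos_of_mulVec_eq_smul [DecidableEq ι] {P L : Matrix ι ι 𝕜} (hP : P.IsHermitian)
    (hPP : P * P = P) (hL : L.PosSemidef) (hker : ∀ x, P *ᵥ x = x → L *ᵥ x = 0 → x = 0)
    {v : ι → 𝕜} (hv0 : v ≠ 0) {μ : 𝕜} (hv : (P * L + 1 - P) *ᵥ v = μ • v) : 0 < μ := by
  obtain rfl | ⟨hPv, hPLv⟩ := eq_one_or_of_mulVec_eq_smul hPP hv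
  · exact zero_lt_one
  have hquad : star v ⬝ᵥ L *ᵥ v = μ * (star v ⬝ᵥ v) :=
    calc star v ⬝ᵥ L *ᵥ v = star (P *ᵥ v) ⬝ᵥ L *ᵥ v := by rw [hPv]
      _ = star v ⬝ᵥ P *ᵥ L *ᵥ v := by rw [star_mulVec, hP.eq, ← dotProduct_mulVec]
      _ = μ * (star v ⬝ᵥ v) := by rw [hPLv, dotProduct_smul, smul_eq_mul]
  have hq : star v ⬝ᵥ L *ᵥ v ≠ 0 := fun h =>
    hv0 (hker v hPv ((hL.dotProduct_mulVec_zero_iff v).mp h))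
  have hs : 0 < star v ⬝ᵥ v := dotProduct_star_self_pos_iff.mpr hv0
  have hμ : μ = (star v ⬝ᵥ L *ᵥ v) / (star v ⬝ᵥ v) := by
    rw [hquad, mul_div_cancel_right₀ _ hs.ne']
  rw [hμ]
  exact div_pos ((hL.dotProduct_mulVec_nonneg v).lt_of_ne' hq) hs

theorem exists_mulVec_eq_smul_of_isRoot_charpoly [DecidableEq ι] {K : Type*} [Field K]
    {M : Matrix ι ι K} {μ : K} (h : M.charpoly.IsRoot μ) : ∃ v ≠ 0, M *ᵥ v = μ • v := by
  have hμ : Module.End.HasEigenvalue (toLin' M) μ := by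
    rw [Module.End.hasEigenvalue_iff_mem_spectrum, spectrum_toLin']
    exact mem_spectrum_iff_isRoot_charpoly.mpr h
  obtain ⟨v, hv⟩ := hμ.exists_hasEigenvector
  exact ⟨v, hv.2, hv.apply_eq_smul⟩

theorem re_map_mulVec {m : Type*} (M : Matrix m ι ℝ) (x : ι → 𝕜) :
    (fun i => RCLike.re ((M.map (algebraMap ℝ 𝕜) *ᵥ x) i)) = M *ᵥ fun j => RCLike.re (x j) := by
  ext i
  simp [mulVec, dotProduct, RCLike.algebraMap_eq_ofReal]

theorem im_map_mulVec {m : Type*} (M : Matrix m ι ℝ) (x : ι → 𝕜) :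
    (fun i => RCLike.im ((M.map (algebraMap ℝ 𝕜) *ᵥ x) i)) = M *ᵥ fun j => RCLike.im (x j) := by
  ext i
  simp [mulVec, dotProduct, RCLike.algebraMap_eq_ofReal]

theorem Matrix.PosSemidef.map_algebraMap {L : Matrix ι ι ℝ} (hL : L.PosSemidef) :
    (L.map (algebraMap ℝ 𝕜)).PosSemidef := by
  classical
  obtain ⟨B, rfl⟩ := CStarAlgebra.nonneg_iff_eq_star_mul_self.mp hL.nonneg
  rw [star_eq_conjTranspose, Matrix.map_mul, conjTranspose_map _ algebraMap_star_comm]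
  exact posSemidef_conjTranspose_mul_self _

theorem eq_zero_of_map_mulVec_eq_self_of_map_mulVec_eq_zero {P L : Matrix ι ι ℝ}
    (hker : ∀ x, P *ᵥ x = x → L *ᵥ x = 0 → x = 0) {x : ι → 𝕜}
    (hPx : P.map (algebraMap ℝ 𝕜) *ᵥ x = x) (hLx : L.map (algebraMap ℝ 𝕜) *ᵥ x = 0) : x = 0 := by
  have hre : (fun i => RCLike.re (x i)) = 0 :=
    hker _ (by rw [← re_map_mulVec, hPx]) (by rw [← re_map_mulVec, hLx]; ext; simp)
  have him : (fun i => RCLike.im (x i)) = 0 :=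
    hker _ (by rw [← im_map_mulVec, hPx]) (by rw [← im_map_mulVec, hLx]; ext; simp)
  ext i
  exact RCLike.ext (by simpa using congrFun hre i) (by simpa using congrFun him i)

theorem pos_of_isRoot_charpoly_map [DecidableEq ι] {P L : Matrix ι ι ℝ} (hP : P.IsSymm)
    (hPP : P * P = P) (hL : L.PosSemidef) (hker : ∀ x, P *ᵥ x = x → L *ᵥ x = 0 → x = 0)
    {μ : 𝕜} (hμ : ((P * L + 1 - P).map (algebraMap ℝ 𝕜)).charpoly.IsRoot μ) : 0 < μ := by
  obtain ⟨v, hv0, hv⟩ := exists_mulVec_eq_smul_of_isRoot_charpoly hμ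
  rw [← RingHom.mapMatrix_apply] at hv
  simp only [map_sub, map_add, map_mul, map_one, RingHom.mapMatrix_apply] at hv
  refine pos_of_mulVec_eq_smul ((isHermitian_iff_isSymm.mpr hP).map _ algebraMap_star_comm)
    (by rw [← Matrix.map_mul, hPP]) hL.map_algebraMap ?_ hv0 hv
  exact fun _ hPx hLx => eq_zero_of_map_mulVec_eq_self_of_map_mulVec_eq_zero hker hPx hLx

end Spectrum

section Projection

variable {n : ℕ}

theorem projMat_isSymm (a : Fin n → ℝ) : (projMat a).IsSymm := by
  simp [projMat, IsSymm, transpose_vecMulVec]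

theorem projMat_mulVec (a w : Fin n → ℝ) :
    projMat a *ᵥ w = w - ((a ⬝ᵥ w) / (a ⬝ᵥ a)) • a := by
  simp [projMat, sub_mulVec, smul_mulVec, vecMulVec_mulVec, smul_smul, div_eq_inv_mul]

theorem dotProduct_projMat_mulVec {a : Fin n → ℝ} (ha : a ≠ 0) (w : Fin n → ℝ) :
    a ⬝ᵥ projMat a *ᵥ w = 0 := by
  have haa : a ⬝ᵥ a ≠ 0 := fun h => ha (dotProduct_self_eq_zero.mp h)
  rw [projMat_mulVec, dotProduct_sub, dotProduct_smul, smul_eq_mul, div_mul_cancel₀ _ haa,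
    sub_self]

theorem projMat_mul_self {a : Fin n → ℝ} (ha : a ≠ 0) : projMat a * projMat a = projMat a :=
  ext_iff_mulVec.mpr fun w => by
    rw [← mulVec_mulVec, projMat_mulVec (w := projMat a *ᵥ w), dotProduct_projMat_mulVec ha,
      zero_div, zero_smul, sub_zero]

theorem dotProduct_eq_zero_of_projMat_mulVec_eq_self {a w : Fin n → ℝ} (ha : a ≠ 0)
    (hw : projMat a *ᵥ w = w) : a ⬝ᵥ w = 0 := by
  rw [← hw, dotProduct_projMat_mulVec ha]

end Projection

section BlockProjection

variable {m n : ℕ}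

theorem blockP_mulVec_apply (a : Fin m → Fin n → ℝ) (x : Fin m × Fin n → ℝ) (i : Fin m)
    (s : Fin n) : (blockP a *ᵥ x) (i, s) = (projMat (a i) *ᵥ fun t => x (i, t)) s := by
  simp [mulVec, dotProduct, blockP, Fintype.sum_prod_type]

theorem blockP_isSymm (a : Fin m → Fin n → ℝ) : (blockP a).IsSymm := by
  ext ⟨i, s⟩ ⟨j, t⟩
  rcases eq_or_ne i j with rfl | h
  · simpa [blockP] using (projMat_isSymm (a i)).apply s t
  · simp [blockP, h, h.symm]

theorem blockP_mul_self {a : Fin m → Fin n → ℝ} (ha : ∀ i, a i ≠ 0) :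
    blockP a * blockP a = blockP a :=
  ext_iff_mulVec.mpr fun x => by
    ext ⟨i, s⟩
    simp only [← mulVec_mulVec, blockP_mulVec_apply]
    rw [mulVec_mulVec, projMat_mul_self (ha i)]

end BlockProjection

theorem kronecker_one_mulVec_apply {R m n : Type*} [Semiring R] [Fintype m] [Fintype n]
    [DecidableEq n] (L : Matrix m m R) (x : m × n → R) (i : m) (k : n) :
    ((L ⊗ₖ (1 : Matrix n n R)) *ᵥ x) (i, k) = (L *ᵥ fun j => x (j, k)) i := by
  simp [mulVec, dotProduct, Fintype.sum_prod_type, one_apply]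

theorem eq_zero_of_blockP_mulVec_eq_self_of_kronecker_mulVec_eq_zero {m n : ℕ}
    {a : Fin m → Fin n → ℝ} (ha : ∀ i, a i ≠ 0)
    (hspan : ∀ z : Fin n → ℝ, (∀ i, a i ⬝ᵥ z = 0) → z = 0)
    {G : SimpleGraph (Fin m)} [DecidableRel G.Adj] (hG : G.Connected) {x : Fin m × Fin n → ℝ}
    (hPx : blockP a *ᵥ x = x)
    (hLx : (G.lapMatrix ℝ ⊗ₖ (1 : Matrix (Fin n) (Fin n) ℝ)) *ᵥ x = 0) : x = 0 := by
  have hconst : ∀ i j k, x (i, k) = x (j, k) := fun i j k =>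
    (G.lapMatrix_mulVec_eq_zero_iff_forall_reachable).mp
      (funext fun i => by simpa [kronecker_one_mulVec_apply] using congrFun hLx (i, k))
      i j (hG.preconnected i j)
  ext ⟨i, k⟩
  have hrow : (fun t => x (i, t)) = 0 := hspan _ fun j => by
    have hfix : projMat (a j) *ᵥ (fun t => x (j, t)) = fun t => x (j, t) :=
      funext fun s => by rw [← blockP_mulVec_apply, hPx]
    simpa only [hconst j i] using dotProduct_eq_zero_of_projMat_mulVec_eq_self (ha j) hfix
  exact congrFun hrow k

/-- If `A` has nonzero rows and trivial kernel and `G` is connected, then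
every complex eigenvalue (root of the characteristic polynomial) of `P L̄ + I - P` is real
and strictly positive. -/
theorem eigenvalues_real_positive
    {n : ℕ} (A : Matrix (Fin n) (Fin n) ℝ)
    (hrows : ∀ i, A i ≠ 0)
    (hker : ∀ x : Fin n → ℝ, A *ᵥ x = 0 → x = 0)
    (G : SimpleGraph (Fin n)) [DecidableRel G.Adj] (hG : G.Connected) :
    ∀ μ : ℂ,
      ((blockP (fun i => A i) * (G.lapMatrix ℝ ⊗ₖ (1 : Matrix (Fin n) (Fin n) ℝ))
          + 1 - blockP (fun i => A i)).map (algebraMap ℝ ℂ)).charpoly.IsRoot μ →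
      μ.im = 0 ∧ 0 < μ.re := by
  intro μ hμ
  have hpos : 0 < μ :=
    pos_of_isRoot_charpoly_map (blockP_isSymm _) (blockP_mul_self hrows)
      ((G.posSemidef_lapMatrix ℝ).kronecker PosSemidef.one)
      (fun _ hPx hLx => eq_zero_of_blockP_mulVec_eq_self_of_kronecker_mulVec_eq_zero hrows
        (fun z hz => hker z (funext hz)) hG hPx hLx) hμ
  exact ⟨(RCLike.pos_iff.mp hpos).2, (RCLike.pos_iff.mp hpos).1⟩
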